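/- arXiv:1003.5677 — 2 statements merged into one kernel-verified Lean document; each statement's English description precedes it below -/
import Mathlib

section
/- A finite (or, assuming the union of value sets is well ordered, arbitrary) direct product of spherically complete ultrametric spaces, with the minimum ultrametric, is spherically complete. -/
/-!
Every point of a closed ball is a centre of it, so a ball is the set of points whose distance to
one fixed centre `c` lies in a nonempty upper set `S` of radii. The coordinate projections of such
a ball in the product are the balls of the same radii `S` around the coordinates of `c`, so a nest
of balls in the product projects onto a nest in every factor. A point `x` whose coordinates lie in
the intersections of the projected nests is in every ball of the nest: each `u i (c i) (x i)`
lies in `S`, and so does their minimum, because `S` is an upper set in a linear order.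
-/

section Ultrametric

variable {Y Y' : Type*} {Γ Γ' : Type*} [LinearOrder Γ] [OrderTop Γ]
  [LinearOrder Γ'] [OrderTop Γ']

/-- The axioms of an ultrametric space with distance values in `Γ` (with top element `∞`). -/
def IsUltrametric (u : Y → Y → Γ) : Prop :=
  (∀ y z, u y z = ⊤ ↔ y = z) ∧
  (∀ x y z, min (u y x) (u x z) ≤ u y z) ∧
  (∀ y z, u y z = u z y)

/-- The closed ball of radius `α` around `y`. -/
def closedBall (u : Y → Y → Γ) (α : Γ) (y : Y) : Set Y := {z | α ≤ u y z}

/-- `B(x,y)`, the smallest closed ball containing `x` and `y`. -/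
def smallBall (u : Y → Y → Γ) (x y : Y) : Set Y := closedBall u (u x y) x

/-- A ball: a union of a nonempty collection of closed balls having a common element. -/
def IsBall (u : Y → Y → Γ) (S : Set Y) : Prop :=
  ∃ C : Set (Γ × Y), C.Nonempty ∧ (∃ y₀, ∀ p ∈ C, y₀ ∈ closedBall u p.1 p.2) ∧
    S = ⋃ p ∈ C, closedBall u p.1 p.2

/-- Spherical completeness: every nest of balls has nonempty intersection. -/
def SphericallyComplete (u : Y → Y → Γ) : Prop :=
  ∀ N : Set (Set Y), N.Nonempty → (∀ B ∈ N, IsBall u B) →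
    IsChain (· ⊆ ·) N → (⋂₀ N).Nonempty

/-- `z'` is an attractor for `f`. -/
def IsAttractor (u : Y → Y → Γ) (u' : Y' → Y' → Γ') (f : Y → Y') (z' : Y') : Prop :=
  ∀ y : Y, f y ≠ z' → ∃ z : Y,
    u' (f y) z' < u' (f z) z' ∧ f '' smallBall u y z ⊆ smallBall u' (f y) z'

/-- A map is immediate if every element of the target is an attractor for it. -/
def Immediate (u : Y → Y → Γ) (u' : Y' → Y' → Γ') (f : Y → Y') : Prop :=
  ∀ z' : Y', IsAttractor u u' f z'

end Ultrametric

section Ultrametric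

variable {Y : Type*} {Γ : Type*} [LinearOrder Γ] [OrderTop Γ] {u : Y → Y → Γ}

theorem IsUltrametric.self_eq_top (hu : IsUltrametric u) (y : Y) : u y y = ⊤ :=
  (hu.1 y y).2 rfl

theorem IsUltrametric.closedBall_eq_of_mem (hu : IsUltrametric u) {α : Γ} {x y : Y}
    (hy : y ∈ closedBall u α x) : closedBall u α x = closedBall u α y := by
  ext z
  constructor
  · intro hz
    exact le_trans (le_min (hu.2.2 y x ▸ hy) hz) (hu.2.1 x y z)
  · intro hz
    exact le_trans (le_min hy hz) (hu.2.1 y x z)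

theorem IsUltrametric.isBall_iff (hu : IsUltrametric u) {B : Set Y} :
    IsBall u B ↔ ∃ (c : Y) (S : Set Γ), S.Nonempty ∧ IsUpperSet S ∧ B = u c ⁻¹' S := by
  constructor
  · rintro ⟨C, hCne, ⟨c, hc⟩, rfl⟩
    refine ⟨c, upperClosure (Prod.fst '' C), (hCne.image _).mono subset_upperClosure,
      (upperClosure _).upper, ?_⟩
    ext z
    simp only [Set.mem_iUnion, Set.mem_preimage, SetLike.mem_coe, mem_upperClosure,
      Set.exists_mem_image, exists_prop]
    refine exists_congr fun p => and_congr_right fun hp => ?_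
    rw [hu.closedBall_eq_of_mem (hc p hp)]
    rfl
  · rintro ⟨c, S, hSne, hS, rfl⟩
    refine ⟨S ×ˢ {c}, hSne.prod (Set.singleton_nonempty c), ⟨c, ?_⟩, ?_⟩
    · rintro ⟨α, _⟩ ⟨-, rfl⟩
      exact le_top.trans_eq (hu.self_eq_top _).symm
    · ext z
      simp only [Set.mem_preimage, Set.mem_iUnion, Set.mem_prod, Set.mem_singleton_iff,
        exists_prop, Prod.exists, closedBall, Set.mem_ofPred_eq]
      constructor
      · exact fun hz => ⟨_, c, ⟨hz, rfl⟩, le_rfl⟩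
      · rintro ⟨α, _, ⟨hα, rfl⟩, hz⟩
        exact hS hz hα

end Ultrametric

section Product

variable {I : Type*} [Fintype I] {Y : I → Type*} {Γ : Type*} [LinearOrder Γ] [OrderTop Γ]

def piMinDist (u : ∀ i, Y i → Y i → Γ) (a b : ∀ i, Y i) : Γ :=
  Finset.univ.inf fun i => u i (a i) (b i)

theorem piMinDist_le (u : ∀ i, Y i → Y i → Γ) (a b : ∀ i, Y i) (i : I) :
    piMinDist u a b ≤ u i (a i) (b i) :=
  Finset.inf_le (Finset.mem_univ i)

theorem isUltrametric_piMinDist {u : ∀ i, Y i → Y i → Γ} (hu : ∀ i, IsUltrametric (u i)) :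
    IsUltrametric (piMinDist u) := by
  refine ⟨fun a b => ?_, fun a b c => ?_, fun a b => ?_⟩
  · simp only [piMinDist, Finset.inf_eq_top_iff, Finset.mem_univ, true_implies, funext_iff,
      (hu _).1]
  · refine Finset.le_inf fun i _ => le_trans ?_ ((hu i).2.1 (a i) (b i) (c i))
    exact min_le_min (piMinDist_le u b a i) (piMinDist_le u a c i)
  · exact Finset.inf_congr rfl fun i _ => (hu i).2.2 _ _

theorem image_eval_preimage_piMinDist {u : ∀ i, Y i → Y i → Γ} (hu : ∀ i, IsUltrametric (u i))
    {S : Set Γ} (hS : IsUpperSet S) (c : ∀ i, Y i) (i : I) :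
    Function.eval i '' (piMinDist u c ⁻¹' S) = u i (c i) ⁻¹' S := by
  classical
  ext w
  constructor
  · rintro ⟨z, hz, rfl⟩
    exact hS (piMinDist_le u c z i) hz
  · intro hw
    refine ⟨Function.update c i w, hS (Finset.le_inf fun j _ => ?_) hw, Function.update_self i w c⟩
    rcases eq_or_ne j i with rfl | hji
    · rw [Function.update_self]
    · rw [Function.update_of_ne hji, (hu j).self_eq_top]
      exact le_top

theorem IsUpperSet.piMinDist_mem {u : ∀ i, Y i → Y i → Γ} {S : Set Γ} (hS : IsUpperSet S)
    (hSne : S.Nonempty) {a b : ∀ i, Y i} (hab : ∀ i, u i (a i) (b i) ∈ S) :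
    piMinDist u a b ∈ S := by
  refine Finset.inf_mem S (hS.top_mem.2 hSne) (fun x hx y hy => ?_) _ _ fun i _ => hab i
  rcases le_total x y with h | h
  · rwa [inf_of_le_left h]
  · rwa [inf_of_le_right h]

theorem SphericallyComplete.piMinDist {u : ∀ i, Y i → Y i → Γ} (hu : ∀ i, IsUltrametric (u i))
    (hsc : ∀ i, SphericallyComplete (u i)) : SphericallyComplete (piMinDist u) := by
  intro N hN hball hchain
  have hproj : ∀ i, (⋂₀ (Set.image (Function.eval i) '' N)).Nonempty := by
    intro i
    refine hsc i _ (hN.image _) ?_ ?_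
    · rintro _ ⟨B, hB, rfl⟩
      obtain ⟨c, S, hSne, hS, rfl⟩ := (isUltrametric_piMinDist hu).isBall_iff.1 (hball B hB)
      rw [image_eval_preimage_piMinDist hu hS]
      exact (hu i).isBall_iff.2 ⟨c i, S, hSne, hS, rfl⟩
    · exact hchain.image_of_map_rel _ _ _ fun _ _ h => Set.image_mono h
  choose x hx using hproj
  refine ⟨x, fun B hB => ?_⟩
  obtain ⟨c, S, hSne, hS, rfl⟩ := (isUltrametric_piMinDist hu).isBall_iff.1 (hball B hB)
  refine hS.piMinDist_mem hSne fun i => ?_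
  simpa only [← Set.mem_preimage, ← image_eval_preimage_piMinDist hu hS] using
    hx i _ ⟨_, hB, rfl⟩

end Product

theorem sphericallyComplete_product_general {I : Type*} [Fintype I] {Γ : Type*}
    [LinearOrder Γ] [OrderTop Γ]
    (Y : I → Type*) (u : ∀ i, Y i → Y i → Γ) (hu : ∀ i, IsUltrametric (u i))
    (hsc : ∀ i, SphericallyComplete (u i)) :
    SphericallyComplete (fun a b : ∀ i, Y i => Finset.univ.inf fun i => u i (a i) (b i)) :=
  SphericallyComplete.piMinDist hu hsc

/-- a finite direct product of spherically complete ultrametric spaces,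
with the minimum ultrametric, is spherically complete. -/
theorem sphericallyComplete_product {I : Type*} [Fintype I] [Nonempty I] {Γ : Type*}
    [LinearOrder Γ] [OrderTop Γ]
    (Y : I → Type*) (u : ∀ i, Y i → Y i → Γ) (hu : ∀ i, IsUltrametric (u i))
    (hsc : ∀ i, SphericallyComplete (u i)) :
    SphericallyComplete (fun a b : ∀ i, Y i => Finset.univ.inf fun i => u i (a i) (b i)) :=
  sphericallyComplete_product_general Y u hu hsc
end

section
/- Let f ∈ O[X] be a polynomial over the valuation ring of a valued field (K,v) and b ∈ O with s := f'(b) ≠ 0. Then f induces a pseudo-linear map with pseudo-slope s from b + sM into f(b) + s²M, where M is the valuation ideal; i.e., for all distinct y,z ∈ b+sM, v(f(y) − f(z) − s(y−z)) > vs + v(y−z). -/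
/-- The axioms of a (Krull) valuation on a field, written additively, with
`v a = ⊤` iff `a = 0`. -/
def IsFieldVal {K : Type*} [Field K] {Γ : Type*} [AddCommGroup Γ] [LinearOrder Γ] [IsOrderedAddMonoid Γ]
    (v : K → WithTop Γ) : Prop :=
  (∀ a, v a = ⊤ ↔ a = 0) ∧ (∀ a b, v (a * b) = v a + v b) ∧
  (∀ a b, min (v a) (v b) ≤ v (a - b))

/-!
Since `s = f'(b)` lies in `O`, the points `y, z ∈ b + sM` lie in `O` and `v (y - z) > v s`.
Over `O`, Taylor expansion at `z` gives `f y - f z - f'(z)(y - z) ∈ (y - z)² O`, and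
`f'(z) - f'(b) ∈ (z - b) O`; hence `f y - f z - s (y - z)` has valuation `> v s + v (y - z)`,
and the ultrametric inequality forces `v (f y - f z) = v s + v (y - z)`.
-/

open Polynomial

namespace IsFieldVal
variable {K : Type*} [Field K] {Γ : Type*} [AddCommGroup Γ] [LinearOrder Γ] [IsOrderedAddMonoid Γ]
  {v : K → WithTop Γ}

theorem map_zero (hv : IsFieldVal v) : v 0 = ⊤ := (hv.1 0).2 rfl

theorem map_neg (hv : IsFieldVal v) (a : K) : v (-a) = v a := by
  have h₁ := hv.2.2 0 a
  have h₂ := hv.2.2 0 (-a)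
  rw [zero_sub, hv.map_zero, min_top_left] at h₁ h₂
  rw [neg_neg] at h₂
  exact le_antisymm h₂ h₁

theorem map_one (hv : IsFieldVal v) : v 1 = 0 := by
  have h := hv.2.1 1 1
  rw [mul_one] at h
  lift v 1 to Γ using (hv.1 1).not.2 one_ne_zero with g
  exact_mod_cast left_eq_add.1 (by exact_mod_cast h)

theorem map_add (hv : IsFieldVal v) (a b : K) : min (v a) (v b) ≤ v (a + b) := by
  simpa only [hv.map_neg, sub_neg_eq_add] using hv.2.2 a (-b)

def toAddValuation (hv : IsFieldVal v) : AddValuation K (WithTop Γ) :=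
  AddValuation.of v hv.map_zero hv.map_one hv.map_add hv.2.1

end IsFieldVal

theorem Subring.eval_map_subtype {R : Type*} [Ring R] {T : Subring R} (p : T[X]) (y : T) :
    (p.map T.subtype).eval (y : R) = p.eval y :=
  eval_map_apply (f := T.subtype) ..

namespace AddValuation

section CommRing
variable {R : Type*} [CommRing R] {Γ₀ : Type*} [LinearOrderedAddCommMonoidWithTop Γ₀]
  (w : AddValuation R Γ₀)

def integer : Subring R where
  carrier := {a | 0 ≤ w a}
  mul_mem' {a b} ha hb := by simpa only [Set.mem_ofPred_eq, map_mul] using add_nonneg ha hb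
  one_mem' := w.map_one.ge
  add_mem' ha hb := w.map_le_add ha hb
  zero_mem' := by simp
  neg_mem' {a} ha := by simpa only [Set.mem_ofPred_eq, map_neg] using ha

variable {w}

theorem mem_integer {a : R} : a ∈ w.integer ↔ 0 ≤ w a := Iff.rfl

theorem le_map_mul_of_mem_integer {c : R} (hc : c ∈ w.integer) (a : R) : w a ≤ w (c * a) := by
  rw [map_mul]
  exact le_add_of_nonneg_left hc

theorem exists_map_eq_of_coeff_mem_integer {f : R[X]} (hf : ∀ i, f.coeff i ∈ w.integer) :
    ∃ p : w.integer[X], p.map w.integer.subtype = f :=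
  (mem_lifts f).1 <| (lifts_iff_coeff_lifts f).2 fun n => ⟨⟨_, hf n⟩, rfl⟩

theorem eval_mem_integer {f : R[X]} (hf : ∀ i, f.coeff i ∈ w.integer) {y : R}
    (hy : y ∈ w.integer) : f.eval y ∈ w.integer := by
  obtain ⟨p, rfl⟩ := exists_map_eq_of_coeff_mem_integer hf
  lift y to w.integer using hy
  rw [Subring.eval_map_subtype]
  exact (p.eval y).2

theorem derivative_coeff_mem_integer {f : R[X]} (hf : ∀ i, f.coeff i ∈ w.integer) (i : ℕ) :
    f.derivative.coeff i ∈ w.integer := by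
  rw [coeff_derivative]
  exact mul_mem (hf _) (add_mem (natCast_mem _ i) (one_mem _))

theorem mem_integer_of_lt_map_sub {s b y : R} (hs : s ∈ w.integer) (hb : b ∈ w.integer)
    (hy : w s < w (y - b)) : y ∈ w.integer := by
  simpa only [add_sub_cancel] using add_mem hb (mem_integer.2 (hs.trans hy.le))

theorem le_map_eval_sub {f : R[X]} (hf : ∀ i, f.coeff i ∈ w.integer) {y z : R}
    (hy : y ∈ w.integer) (hz : z ∈ w.integer) : w (y - z) ≤ w (f.eval y - f.eval z) := by
  obtain ⟨p, rfl⟩ := exists_map_eq_of_coeff_mem_integer hf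
  lift y to w.integer using hy
  lift z to w.integer using hz
  obtain ⟨c, hc⟩ := sub_dvd_eval_sub y z p
  have hcR : (p.map w.integer.subtype).eval ↑y - (p.map w.integer.subtype).eval ↑z =
      c * (↑y - ↑z) := by
    rw [Subring.eval_map_subtype, Subring.eval_map_subtype]
    have hcR := congrArg Subtype.val hc
    push_cast at hcR
    linear_combination hcR
  rw [hcR]
  exact le_map_mul_of_mem_integer c.2 _

theorem le_map_eval_sub_sub_derivative_mul {f : R[X]} (hf : ∀ i, f.coeff i ∈ w.integer) {y z : R}
    (hy : y ∈ w.integer) (hz : z ∈ w.integer) :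
    w (y - z) + w (y - z) ≤ w (f.eval y - f.eval z - f.derivative.eval z * (y - z)) := by
  obtain ⟨p, rfl⟩ := exists_map_eq_of_coeff_mem_integer hf
  lift y to w.integer using hy
  lift z to w.integer using hz
  obtain ⟨c, hc⟩ := binomExpansion p z (y - z)
  rw [add_sub_cancel] at hc
  have hcR : (p.map w.integer.subtype).eval ↑y - (p.map w.integer.subtype).eval ↑z -
      (p.map w.integer.subtype).derivative.eval ↑z * (↑y - ↑z) = c * ((↑y - ↑z) * (↑y - ↑z)) := by
    rw [derivative_map, Subring.eval_map_subtype, Subring.eval_map_subtype,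
      Subring.eval_map_subtype]
    have hcR := congrArg Subtype.val hc
    push_cast at hcR
    linear_combination hcR
  rw [hcR, ← map_mul]
  exact le_map_mul_of_mem_integer c.2 _

end CommRing

section Field
variable {K : Type*} [Field K] {Γ : Type*} [AddCommGroup Γ] [LinearOrder Γ] [IsOrderedAddMonoid Γ]
  {w : AddValuation K (WithTop Γ)} {f : K[X]} {b y z : K}

theorem lt_map_eval_sub_sub_mul (hf : ∀ i, f.coeff i ∈ w.integer) (hb : b ∈ w.integer)
    (hy : w (f.derivative.eval b) < w (y - b)) (hz : w (f.derivative.eval b) < w (z - b))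
    (hyz : y ≠ z) :
    w (f.derivative.eval b) + w (y - z) <
      w (f.eval y - f.eval z - f.derivative.eval b * (y - z)) := by
  set s := f.derivative.eval b
  have hf' := derivative_coeff_mem_integer hf
  have hs : s ∈ w.integer := eval_mem_integer hf' hb
  have hyO := mem_integer_of_lt_map_sub hs hb hy
  have hzO := mem_integer_of_lt_map_sub hs hb hz
  have hδ : w s < w (y - z) :=
    (lt_min hy hz).trans_le (sub_sub_sub_cancel_right y z b ▸ w.map_sub _ _)
  have hδ_ne_top : w (y - z) ≠ ⊤ := w.ne_top_iff.2 (sub_ne_zero.2 hyz)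
  have hsplit : f.eval y - f.eval z - s * (y - z) =
      (f.eval y - f.eval z - f.derivative.eval z * (y - z)) +
        (f.derivative.eval z - s) * (y - z) := by ring
  rw [hsplit]
  refine (lt_min ?_ ?_).trans_le (w.map_add _ _)
  · calc w s + w (y - z) < w (y - z) + w (y - z) := WithTop.add_lt_add_right hδ_ne_top hδ
      _ ≤ _ := le_map_eval_sub_sub_derivative_mul hf hyO hzO
  · rw [map_mul]
    exact WithTop.add_lt_add_right hδ_ne_top (hz.trans_le (le_map_eval_sub hf' hzO hb))

theorem map_eval_sub_eq (hf : ∀ i, f.coeff i ∈ w.integer) (hb : b ∈ w.integer)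
    (hy : w (f.derivative.eval b) < w (y - b)) (hz : w (f.derivative.eval b) < w (z - b))
    (hyz : y ≠ z) :
    w (f.eval y - f.eval z) = w (f.derivative.eval b) + w (y - z) := by
  have h := lt_map_eval_sub_sub_mul hf hb hy hz hyz
  rw [← map_mul] at h
  rw [← add_sub_cancel (f.derivative.eval b * (y - z)) (f.eval y - f.eval z),
    w.map_add_eq_of_lt_left h, map_mul]

theorem lt_map_eval_sub_eval (hf : ∀ i, f.coeff i ∈ w.integer) (hb : b ∈ w.integer)
    (hs : f.derivative.eval b ≠ 0) (hy : w (f.derivative.eval b) < w (y - b)) :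
    w (f.derivative.eval b) + w (f.derivative.eval b) < w (f.eval y - f.eval b) := by
  have hs_ne_top := w.ne_top_iff.2 hs
  rcases eq_or_ne y b with rfl | hyb
  · rw [sub_self, map_zero]
    exact WithTop.add_lt_top.2 ⟨hs_ne_top.lt_top, hs_ne_top.lt_top⟩
  · have hb' : w (f.derivative.eval b) < w (b - b) := by
      rw [sub_self, map_zero]
      exact hs_ne_top.lt_top
    rw [map_eval_sub_eq hf hb hy hb' hyb]
    exact WithTop.add_lt_add_left hs_ne_top hy

end Field

end AddValuation

/-- if `f ∈ O[X]` and `b ∈ O` with `s := f'(b) ≠ 0`, then `f` induces a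
pseudo-linear map with pseudo-slope `s` from `b + sM` into `f(b) + s²M`. -/
theorem polynomial_pseudoLinear {K : Type*} [Field K] {Γ : Type*}
    [AddCommGroup Γ] [LinearOrder Γ] [IsOrderedAddMonoid Γ] (v : K → WithTop Γ) (hv : IsFieldVal v)
    (f : Polynomial K) (hf : ∀ i : ℕ, 0 ≤ v (f.coeff i))
    (b : K) (hb : 0 ≤ v b)
    (hs : Polynomial.eval b (Polynomial.derivative f) ≠ 0) :
    (∀ y : K, v (Polynomial.eval b (Polynomial.derivative f)) < v (y - b) →
      v (Polynomial.eval b (Polynomial.derivative f)) +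
          v (Polynomial.eval b (Polynomial.derivative f)) <
        v (Polynomial.eval y f - Polynomial.eval b f)) ∧
    ∀ y z : K, v (Polynomial.eval b (Polynomial.derivative f)) < v (y - b) →
      v (Polynomial.eval b (Polynomial.derivative f)) < v (z - b) → y ≠ z →
        v (Polynomial.eval y f - Polynomial.eval z f) =
            v (Polynomial.eval b (Polynomial.derivative f)) + v (y - z) ∧
          v (Polynomial.eval b (Polynomial.derivative f)) + v (y - z) <
            v (Polynomial.eval y f - Polynomial.eval z f -
                Polynomial.eval b (Polynomial.derivative f) * (y - z)) := by
  let w := hv.toAddValuation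
  refine ⟨fun y hy => w.lt_map_eval_sub_eval (f := f) hf hb hs hy,
    fun y z hy hz hyz => ⟨w.map_eval_sub_eq (f := f) hf hb hy hz hyz,
      w.lt_map_eval_sub_sub_mul (f := f) hf hb hy hz hyz⟩⟩
end
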